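/- arXiv:2512.13146 — 2 statements merged into one kernel-verified Lean document; each statement's English description precedes it below -/
import Mathlib

section
/- Let n_max ∈ ℕ and suppose N ≥ 2·n_max + 1 and M ≥ n_max + 1. Then there exist bin edges x_1 < x_2 < … < x_{M+1} (real numbers) such that the family of truncated homodyne POVM matrices {Π(I_i, θ_k) : 1 ≤ i ≤ M, 0 ≤ k ≤ N−1}, with bins I_i = [x_i, x_{i+1}) and phases θ_k = 2πk/N, spans the full matrix space M_{n_max+1}(ℂ) as a complex vector space (i.e., the POVM is informationally complete for cutoff n_max). -/
/-- The `n`-th physicists' Hermite polynomial (as a function),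
`H_n(x) = (−1)^n e^{x²} (d/dx)^n e^{−x²}`. -/
noncomputable def physHermite (n : ℕ) (x : ℝ) : ℝ :=
  (-1 : ℝ) ^ n * Real.exp (x ^ 2) * iteratedDeriv n (fun y => Real.exp (-y ^ 2)) x

/-- The normalized Hermite overlap integral
`(2^{m+n} m! n! π)^{−1/2} ∫_u^v H_m(x) H_n(x) e^{−x²} dx`. -/
noncomputable def hermOverlap (m n : ℕ) (u v : ℝ) : ℝ :=
  (Real.sqrt (2 ^ (m + n) * m.factorial * n.factorial * Real.pi))⁻¹ *
    ∫ x in u..v, physHermite m x * physHermite n x * Real.exp (-x ^ 2)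

/-- The truncated homodyne POVM matrix `Π([u,v), θ)` for photon-number cutoff `nmax`:
`Π(I,θ)_{m,n} = e^{i(m−n)θ} (2^{m+n} m! n! π)^{−1/2} ∫_u^v H_m H_n e^{−x²}`. -/
noncomputable def homPOVM (nmax : ℕ) (u v θ : ℝ) :
    Matrix (Fin (nmax + 1)) (Fin (nmax + 1)) ℂ :=
  Matrix.of fun m n =>
    Complex.exp (Complex.I * (((m : ℕ) : ℂ) - ((n : ℕ) : ℂ)) * (θ : ℂ)) *
      (hermOverlap m n u v : ℂ)

/-!
A linear functional `φ` on matrices that kills every `Π(I_i, θ_k)` is zero. With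
`a_{mn} = φ(E_{mn})`, the phases `e^{i(m-n)θ_k}` are powers of a primitive `N`-th root of unity;
since `N ≥ 2 n_max + 1` the frequencies `m - n ∈ [-n_max, n_max]` are distinct modulo `N`, and a
Vandermonde argument separates the diagonals: `Σ_{m-n=s} Π(I_i, 0)_{mn} a_{mn} = 0` for every bin.
For real coefficients `b_{mn}` this says that `q = Σ_{m-n=s} c_{mn} b_{mn} H_m H_n`, with `c_{mn}`
the normalising constants of `Π`, has `∫_{I_i} q e^{-x²} = 0`, so `q` has a root in every bin.
The bins lie in `[0, ∞)` and `q` has the parity of `s`, so `q` has `2M > 2 n_max ≥ deg q` roots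
and vanishes; the degrees `m + n` along a diagonal are distinct, so all `b_{mn} = 0`. Apply this
to the real and imaginary parts of `a`.
-/

open Polynomial

noncomputable def physHermitePoly : ℕ → ℝ[X]
  | 0 => 1
  | n + 1 => C 2 * X * physHermitePoly n - derivative (physHermitePoly n)

theorem degree_physHermitePoly (n : ℕ) : (physHermitePoly n).degree = n := by
  induction n with
  | zero => simp [physHermitePoly]
  | succ n ih =>
    have hlead : (C 2 * X * physHermitePoly n).degree = ↑(n + 1) := by
      rw [degree_mul, degree_C_mul_X two_ne_zero, ih, add_comm]; rfl
    have hder : (derivative (physHermitePoly n)).degree < ↑(n + 1) :=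
      degree_derivative_le.trans_lt (by rw [ih]; exact_mod_cast n.lt_succ_self)
    rw [physHermitePoly, degree_sub_eq_left_of_degree_lt (hlead ▸ hder), hlead]

theorem natDegree_physHermitePoly (n : ℕ) : (physHermitePoly n).natDegree = n :=
  natDegree_eq_of_degree_eq_some (degree_physHermitePoly n)

theorem physHermitePoly_ne_zero (n : ℕ) : physHermitePoly n ≠ 0 :=
  fun h => by simpa [h] using degree_physHermitePoly n

theorem iteratedDeriv_exp_neg_sq (n : ℕ) :
    iteratedDeriv n (fun y => Real.exp (-y ^ 2)) =
      fun x => (-1) ^ n * (physHermitePoly n).eval x * Real.exp (-x ^ 2) := by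
  induction n with
  | zero => funext x; simp [physHermitePoly]
  | succ n ih =>
    funext x
    rw [iteratedDeriv_succ, ih]
    have hgauss : HasDerivAt (fun y => Real.exp (-y ^ 2)) (-(2 * x) * Real.exp (-x ^ 2)) x := by
      simpa [mul_comm] using ((hasDerivAt_pow 2 x).fun_neg).exp
    refine ((((physHermitePoly n).hasDerivAt x).const_mul ((-1 : ℝ) ^ n)).mul hgauss
      |>.congr_deriv ?_).deriv
    simp only [physHermitePoly, eval_sub, eval_mul, eval_C, eval_X]
    ring

theorem physHermite_eq_eval (n : ℕ) (x : ℝ) : physHermite n x = (physHermitePoly n).eval x := by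
  rw [physHermite, iteratedDeriv_exp_neg_sq]
  calc (-1) ^ n * Real.exp (x ^ 2) * ((-1) ^ n * (physHermitePoly n).eval x * Real.exp (-x ^ 2))
      = ((-1) ^ n * (-1) ^ n) * (Real.exp (x ^ 2) * Real.exp (-x ^ 2)) *
          (physHermitePoly n).eval x := by ring
    _ = (physHermitePoly n).eval x := by
      rw [← Real.exp_add, add_neg_cancel, Real.exp_zero, ← mul_pow]; simp

theorem physHermitePoly_eval_neg (n : ℕ) (x : ℝ) :
    (physHermitePoly n).eval (-x) = (-1) ^ n * (physHermitePoly n).eval x := by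
  have heven : iteratedDeriv n (fun y => Real.exp (-y ^ 2)) (-x) =
      (-1) ^ n * iteratedDeriv n (fun y => Real.exp (-y ^ 2)) x := by
    have h := iteratedDeriv_comp_neg n (fun y => Real.exp (-y ^ 2)) (-x)
    simp only [neg_neg, smul_eq_mul] at h
    simp_rw [← h, neg_sq]
  rw [← physHermite_eq_eval, ← physHermite_eq_eval, physHermite, physHermite, heven, neg_sq]
  ring

theorem hermOverlap_eq_integral (m n : ℕ) (u v : ℝ) :
    hermOverlap m n u v = (Real.sqrt (2 ^ (m + n) * m.factorial * n.factorial * Real.pi))⁻¹ *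
      ∫ x in u..v, (physHermitePoly m * physHermitePoly n).eval x * Real.exp (-x ^ 2) := by
  simp only [hermOverlap, physHermite_eq_eval, eval_mul]

theorem Polynomial.eq_zero_of_sum_smul_eq_zero_of_injOn_natDegree {ι K : Type*} [Field K]
    {P : ι → K[X]} {s : Finset ι} (hP : ∀ i ∈ s, P i ≠ 0)
    (hdeg : Set.InjOn (fun i => (P i).natDegree) s) {g : ι → K}
    (hsum : ∑ i ∈ s, g i • P i = 0) : ∀ i ∈ s, g i = 0 := by
  intro i hi
  by_contra hgi
  have hdisj : Set.Pairwise {j | j ∈ s ∧ g j • P j ≠ 0}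
      (Function.onFun Ne (degree ∘ fun j => g j • P j)) := by
    rintro j ⟨hj, hj0⟩ k ⟨hk, hk0⟩ hjk
    have hgj : g j ≠ 0 := left_ne_zero_of_smul hj0
    have hgk : g k ≠ 0 := left_ne_zero_of_smul hk0
    simp only [Function.onFun, Function.comp_apply, smul_eq_C_mul, degree_C_mul hgj,
      degree_C_mul hgk, degree_eq_natDegree (hP j hj), degree_eq_natDegree (hP k hk), ne_eq,
      Nat.cast_inj]
    exact fun h => hjk (hdeg hj hk h)
  have hle := Finset.le_sup (f := fun j => degree (g j • P j)) hi
  rw [← degree_sum_eq_of_disjoint _ s hdisj, hsum, degree_zero, le_bot_iff, degree_eq_bot,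
    smul_eq_zero] at hle
  exact hle.elim hgi (hP i hi)

theorem Polynomial.eq_zero_of_pos_roots_of_symm {M : ℕ} {q : ℝ[X]}
    (hsymm : ∀ t, q.eval t = 0 → q.eval (-t) = 0) {c : Fin M → ℝ} (hc : Function.Injective c)
    (hpos : ∀ i, 0 < c i) (hroot : ∀ i, q.eval (c i) = 0) (hdeg : q.natDegree < 2 * M) :
    q = 0 := by
  refine eq_zero_of_natDegree_lt_card_of_eval_eq_zero q (f := Sum.elim c (-c))
    (hc.sumElim (neg_injective.comp hc) fun i j h => ?_) ?_ (by simpa [two_mul] using hdeg)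
  · linarith [hpos i, hpos j, show c i = -c j from h]
  · rintro (i | i)
    exacts [hroot i, hsymm _ (hroot i)]

theorem exists_mem_Ioo_eq_zero_of_intervalIntegral_eq_zero {g : ℝ → ℝ} (hg : Continuous g)
    {u v : ℝ} (huv : u < v) (h : ∫ t in u..v, g t = 0) : ∃ c ∈ Set.Ioo u v, g c = 0 := by
  have hprim : ∀ t, HasDerivAt (fun w => ∫ s in u..w, g s) (g t) t := fun t =>
    intervalIntegral.integral_hasDerivAt_right (hg.intervalIntegrable _ _)
      (hg.stronglyMeasurableAtFilter _ _) hg.continuousAt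
  exact exists_hasDerivAt_eq_zero huv (fun t _ => (hprim t).continuousAt.continuousWithinAt)
    (by simp [h]) fun t _ => hprim t

theorem Polynomial.eq_zero_of_forall_intervalIntegral_eq_zero {M : ℕ} {x : Fin (M + 1) → ℝ}
    (hx : StrictMono x) (hx0 : 0 ≤ x 0) {w : ℝ → ℝ} (hw : Continuous w) (hw0 : ∀ t, w t ≠ 0)
    {q : ℝ[X]} (hsymm : ∀ t, q.eval t = 0 → q.eval (-t) = 0) (hdeg : q.natDegree < 2 * M)
    (hint : ∀ i : Fin M, ∫ t in x i.castSucc..x i.succ, q.eval t * w t = 0) : q = 0 := by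
  have hbin : ∀ i : Fin M, ∃ c ∈ Set.Ioo (x i.castSucc) (x i.succ), q.eval c = 0 := fun i =>
    have ⟨c, hc, hqc⟩ := exists_mem_Ioo_eq_zero_of_intervalIntegral_eq_zero
      (q.continuous.mul hw) (hx Fin.castSucc_lt_succ) (hint i)
    ⟨c, hc, (mul_eq_zero.mp hqc).resolve_right (hw0 c)⟩
  choose c hc hroot using hbin
  have hmono : StrictMono c := fun i j hij =>
    calc c i < x i.succ := (hc i).2
      _ ≤ x j.castSucc := hx.monotone (Fin.succ_le_castSucc_iff.mpr hij)
      _ < c j := (hc j).1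
  refine eq_zero_of_pos_roots_of_symm hsymm hmono.injective (fun i => ?_) hroot hdeg
  exact hx0.trans_lt ((hx.monotone (Fin.zero_le _)).trans_lt (hc i).1)

theorem eval_neg_sum_smul_physHermitePoly_mul {d : ℕ} {s : ℤ} {F : Finset (Fin d × Fin d)}
    (hF : ∀ p ∈ F, (p.1 : ℤ) - p.2 = s) (β : Fin d × Fin d → ℝ) (t : ℝ) :
    (∑ p ∈ F, β p • (physHermitePoly p.1 * physHermitePoly p.2)).eval (-t) =
      (-1) ^ s.natAbs * (∑ p ∈ F, β p • (physHermitePoly p.1 * physHermitePoly p.2)).eval t := by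
  simp only [eval_finsetSum, eval_smul, eval_mul, physHermitePoly_eval_neg, smul_eq_mul,
    Finset.mul_sum]
  refine Finset.sum_congr rfl fun p hp => ?_
  have hsign : (-1 : ℝ) ^ (p.1 : ℕ) * (-1) ^ (p.2 : ℕ) = (-1) ^ s.natAbs := by
    rw [← pow_add, neg_one_pow_eq_pow_mod_two, neg_one_pow_eq_pow_mod_two (n := s.natAbs)]
    have := hF p hp
    congr 1
    omega
  rw [← hsign]
  ring

theorem eq_zero_of_forall_sum_mul_hermOverlap_eq_zero {d M : ℕ} (hdM : d ≤ M)
    {x : Fin (M + 1) → ℝ} (hx : StrictMono x) (hx0 : 0 ≤ x 0) {s : ℤ}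
    {F : Finset (Fin d × Fin d)} (hF : ∀ p ∈ F, (p.1 : ℤ) - p.2 = s) {b : Fin d × Fin d → ℝ}
    (h : ∀ i : Fin M, ∑ p ∈ F, b p * hermOverlap p.1 p.2 (x i.castSucc) (x i.succ) = 0) :
    ∀ p ∈ F, b p = 0 := by
  intro p₀ hp₀
  have hM : 0 < M := by have := p₀.1.isLt; omega
  set κ : Fin d × Fin d → ℝ := fun p =>
    (Real.sqrt (2 ^ ((p.1 : ℕ) + p.2) * (p.1 : ℕ).factorial * (p.2 : ℕ).factorial * Real.pi))⁻¹
  have hdegP : ∀ p : Fin d × Fin d,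
      (physHermitePoly p.1 * physHermitePoly p.2).natDegree = p.1 + p.2 := fun p => by
    rw [natDegree_mul (physHermitePoly_ne_zero _) (physHermitePoly_ne_zero _),
      natDegree_physHermitePoly, natDegree_physHermitePoly]
  have hq : ∑ p ∈ F, (κ p * b p) • (physHermitePoly p.1 * physHermitePoly p.2) = 0 := by
    refine eq_zero_of_forall_intervalIntegral_eq_zero hx hx0 (w := fun t => Real.exp (-t ^ 2))
      (by fun_prop) (fun t => (Real.exp_pos _).ne') (fun t ht => ?_) ?_ fun i => ?_
    · rw [eval_neg_sum_smul_physHermitePoly_mul hF, ht, mul_zero]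
    · refine (natDegree_sum_le_of_forall_le F _ (n := 2 * M - 1) fun p _ =>
        (natDegree_smul_le _ _).trans ?_).trans_lt (by omega)
      have := p.1.isLt
      have := p.2.isLt
      rw [hdegP]
      omega
    · rw [← h i]
      simp only [eval_finsetSum, eval_smul, smul_eq_mul, Finset.sum_mul]
      rw [intervalIntegral.integral_finsetSum fun p _ =>
        (by fun_prop : Continuous _).intervalIntegrable _ _]
      refine Finset.sum_congr rfl fun p _ => ?_
      simp only [hermOverlap_eq_integral, mul_assoc, intervalIntegral.integral_const_mul, κ]
      ring
  have hκb := eq_zero_of_sum_smul_eq_zero_of_injOn_natDegree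
    (fun p _ => mul_ne_zero (physHermitePoly_ne_zero _) (physHermitePoly_ne_zero _))
    (fun p hp r hr hpr => ?_) hq p₀ hp₀
  · exact (mul_eq_zero.mp hκb).resolve_left (inv_ne_zero (Real.sqrt_ne_zero'.mpr (by positivity)))
  · have := hF p hp
    have := hF r hr
    simp only [hdegP] at hpr
    exact Prod.ext (Fin.ext (by omega)) (Fin.ext (by omega))

theorem eq_zero_of_forall_sum_hermOverlap_mul_eq_zero {d M : ℕ} (hdM : d ≤ M)
    {x : Fin (M + 1) → ℝ} (hx : StrictMono x) (hx0 : 0 ≤ x 0) {s : ℤ}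
    {F : Finset (Fin d × Fin d)} (hF : ∀ p ∈ F, (p.1 : ℤ) - p.2 = s) {a : Fin d × Fin d → ℂ}
    (h : ∀ i : Fin M, ∑ p ∈ F, (hermOverlap p.1 p.2 (x i.castSucc) (x i.succ) : ℂ) * a p = 0) :
    ∀ p ∈ F, a p = 0 := by
  intro p hp
  apply Complex.ext
  · refine eq_zero_of_forall_sum_mul_hermOverlap_eq_zero hdM hx hx0 hF (b := fun p => (a p).re)
      (fun i => ?_) p hp
    simpa [Complex.re_sum, mul_comm] using congrArg Complex.re (h i)
  · refine eq_zero_of_forall_sum_mul_hermOverlap_eq_zero hdM hx hx0 hF (b := fun p => (a p).im)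
      (fun i => ?_) p hp
    simpa [Complex.im_sum, mul_comm] using congrArg Complex.im (h i)

theorem IsPrimitiveRoot.sum_fiber_eq_zero {K ι : Type*} [CommRing K] [IsDomain K] {ζ : K}
    {N L : ℕ} (hζ : IsPrimitiveRoot ζ N) (hLN : L ≤ N) {s : Finset ι} {e : ι → ℕ}
    (he : ∀ i ∈ s, e i < L) {g : ι → K} (h : ∀ k < L, ∑ i ∈ s, ζ ^ (k * e i) * g i = 0)
    (j : ℕ) : ∑ i ∈ s with e i = j, g i = 0 := by
  set G : Fin L → K := fun j => ∑ i ∈ s with e i = j, g i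
  have hG : G = 0 := by
    refine Matrix.eq_zero_of_forall_index_sum_pow_mul_eq_zero (f := fun k : Fin L => ζ ^ (k : ℕ))
      (fun k l hkl => Fin.ext (hζ.pow_inj (k.2.trans_le hLN) (l.2.trans_le hLN) hkl)) fun k => ?_
    calc ∑ j : Fin L, (ζ ^ (k : ℕ)) ^ (j : ℕ) * G j
        = ∑ j ∈ Finset.range L, ∑ i ∈ s with e i = j, ζ ^ ((k : ℕ) * e i) * g i := by
          rw [Fin.sum_univ_eq_sum_range (fun j => (ζ ^ (k : ℕ)) ^ j * ∑ i ∈ s with e i = j, g i)]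
          refine Finset.sum_congr rfl fun j _ => ?_
          rw [Finset.mul_sum]
          refine Finset.sum_congr rfl fun i hi => ?_
          rw [(Finset.mem_filter.mp hi).2, pow_mul]
      _ = ∑ i ∈ s, ζ ^ ((k : ℕ) * e i) * g i :=
          Finset.sum_fiberwise_of_maps_to (fun i hi => Finset.mem_range.mpr (he i hi)) _
      _ = 0 := h k k.2
  by_cases hj : j < L
  · exact congrFun hG ⟨j, hj⟩
  · refine Finset.sum_eq_zero fun i hi => ?_
    obtain ⟨his, rfl⟩ := Finset.mem_filter.mp hi
    exact absurd (he i his) hj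

theorem Matrix.linearMap_apply_eq_sum {m n R : Type*} [Fintype m] [Fintype n] [DecidableEq m]
    [DecidableEq n] [CommSemiring R] (φ : Matrix m n R →ₗ[R] R) (X : Matrix m n R) :
    φ X = ∑ p : m × n, X p.1 p.2 * φ (Matrix.single p.1 p.2 1) := by
  conv_lhs => rw [Matrix.matrix_eq_sum_single X]
  simp only [map_sum, Fintype.sum_prod_type]
  refine Finset.sum_congr rfl fun i _ => Finset.sum_congr rfl fun j _ => ?_
  rw [← smul_eq_mul, ← map_smul, Matrix.smul_single, smul_eq_mul, mul_one]

theorem exp_two_pi_I_div_pow_mul_exp (N k m n c : ℕ) (hn : n ≤ c) :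
    Complex.exp (2 * Real.pi * Complex.I / N) ^ (k * c) *
        Complex.exp (Complex.I * ((m : ℂ) - n) * ((2 * Real.pi * k / N : ℝ) : ℂ)) =
      Complex.exp (2 * Real.pi * Complex.I / N) ^ (k * (m + c - n)) := by
  rw [← Complex.exp_nat_mul, ← Complex.exp_nat_mul, ← Complex.exp_add]
  congr 1
  push_cast [Nat.cast_sub (show n ≤ m + c by omega)]
  ring

theorem span_homPOVM_eq_top {nmax N M : ℕ} (hN : 2 * nmax + 1 ≤ N) (hM : nmax + 1 ≤ M)
    {x : Fin (M + 1) → ℝ} (hx : StrictMono x) (hx0 : 0 ≤ x 0) :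
    Submodule.span ℂ (Set.range fun p : Fin M × Fin N =>
      homPOVM nmax (x p.1.castSucc) (x p.1.succ) (2 * Real.pi * (p.2 : ℕ) / N)) = ⊤ := by
  rw [← Submodule.dualAnnihilator_eq_bot_iff, Submodule.eq_bot_iff]
  intro φ hφ
  set a : Fin (nmax + 1) × Fin (nmax + 1) → ℂ := fun p => φ (Matrix.single p.1 p.2 1)
  suffices ha : ∀ p, a p = 0 from
    LinearMap.ext fun X => by simp [Matrix.linearMap_apply_eq_sum φ X, a, ha]
  set ζ := Complex.exp (2 * Real.pi * Complex.I / N)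
  set e : Fin (nmax + 1) × Fin (nmax + 1) → ℕ := fun p => p.1 + nmax - p.2
  have hvanish : ∀ (i : Fin M), ∀ k < N, ∑ p, ζ ^ (k * e p) *
      ((hermOverlap p.1 p.2 (x i.castSucc) (x i.succ) : ℂ) * a p) = 0 := by
    intro i k hk
    have hφik := (Submodule.mem_dualAnnihilator φ).mp hφ _
      (Submodule.subset_span ⟨(i, ⟨k, hk⟩), rfl⟩)
    rw [Matrix.linearMap_apply_eq_sum] at hφik
    -- the factor `ζ ^ (k * nmax)` shifts the frequencies `m - n` into `[0, 2 * nmax]`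
    rw [← mul_zero (ζ ^ (k * nmax)), ← hφik, Finset.mul_sum]
    refine Finset.sum_congr rfl fun p _ => ?_
    rw [← exp_two_pi_I_div_pow_mul_exp N k p.1 p.2 nmax (Nat.lt_succ_iff.mp p.2.2)]
    simp only [homPOVM, Matrix.of_apply]
    ring
  intro p₀
  refine eq_zero_of_forall_sum_hermOverlap_mul_eq_zero hM hx hx0 (s := (p₀.1 : ℤ) - p₀.2)
    (F := Finset.univ.filter fun p => e p = e p₀) (fun p hp => ?_) (fun i => ?_) p₀
    (Finset.mem_filter.mpr ⟨Finset.mem_univ _, rfl⟩)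
  · have := (Finset.mem_filter.mp hp).2
    have := p.2.2
    have := p₀.2.2
    simp only [e] at *
    omega
  · exact (Complex.isPrimitiveRoot_exp N (by omega)).sum_fiber_eq_zero hN
      (fun p _ => by have := p.1.2; simp only [e]; omega) (fun k hk => hvanish i k (by omega))
      (e p₀)

/-- If `N ≥ 2 n_max + 1` and `M ≥ n_max + 1` then there exist bin edges
`x_1 < … < x_{M+1}` such that the POVM matrices `Π([x_i, x_{i+1}), 2πk/N)` span the full
matrix space `M_{n_max+1}(ℂ)`, i.e. the POVM is informationally complete for cutoff `n_max`. -/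
theorem homPOVM_informationally_complete (nmax N M : ℕ)
    (hN : N ≥ 2 * nmax + 1) (hM : M ≥ nmax + 1) :
    ∃ x : Fin (M + 1) → ℝ, StrictMono x ∧
      Submodule.span ℂ
        (Set.range fun p : Fin M × Fin N =>
          homPOVM nmax (x p.1.castSucc) (x p.1.succ)
            (2 * Real.pi * (p.2 : ℕ) / N)) = ⊤ := by
  have hx : StrictMono fun i : Fin (M + 1) => ((i : ℕ) : ℝ) := fun _ _ hij => Nat.cast_lt.mpr hij
  exact ⟨fun i => ((i : ℕ) : ℝ), hx, span_homPOVM_eq_top (x := fun i => ((i : ℕ) : ℝ)) hN hM hx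
    (Nat.cast_nonneg _)⟩
end

section
/- Let n_max ∈ ℕ and M ≥ n_max + 1. Then there exist bin edges x_1 < x_2 < … < x_{M+1} such that for every a ∈ {0, 1, …, n_max}, the M × (n_max − a + 1) real matrix H_a with entries (H_a)_{i,b} = (2^{2b+a} · b! · (b+a)! · π)^{−1/2} ∫_{x_i}^{x_{i+1}} H_b(x) H_{b+a}(x) e^{−x²} dx (for i = 1,…,M and b = 0,…,n_max−a) has full column rank n_max − a + 1. In particular, for these bins, if complex coefficients r_{m,n} (0 ≤ m, n ≤ n_max) satisfy Σ_{m−n = a} r_{m,n} (H_a)_{i, n} = 0 for all i and all offsets a, then all r_{m,n} = 0. -/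
open Polynomial in
noncomputable def hPoly : ℕ → Polynomial ℝ
  | 0 => 1
  | n+1 => 2 * Polynomial.X * hPoly n - Polynomial.derivative (hPoly n)

lemma iteratedDeriv_gauss (n : ℕ) (x : ℝ) :
    iteratedDeriv n (fun y => Real.exp (-y ^ 2)) x
      = (-1 : ℝ) ^ n * (hPoly n).eval x * Real.exp (-x ^ 2) := by
  induction n generalizing x with
  | zero => simp [hPoly]
  | succ n ih =>
    rw [iteratedDeriv_succ]
    have hD : ∀ y : ℝ, HasDerivAt (fun z : ℝ => (-1 : ℝ) ^ n * (hPoly n).eval z * Real.exp (-z ^ 2))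
        ((-1 : ℝ) ^ (n+1) * (hPoly (n+1)).eval y * Real.exp (-y ^ 2)) y := by
      intro y
      have h1 : HasDerivAt (fun z : ℝ => (hPoly n).eval z) ((Polynomial.derivative (hPoly n)).eval y) y :=
        (hPoly n).hasDerivAt y
      have h2 : HasDerivAt (fun z : ℝ => -z ^ 2) (-(2 * y)) y := by
        simpa using ((hasDerivAt_pow 2 y).fun_neg)
      have h3 : HasDerivAt (fun z : ℝ => Real.exp (-z ^ 2)) (Real.exp (-y ^ 2) * -(2 * y)) y :=
        h2.exp
      have h4 := ((h1.const_mul ((-1 : ℝ) ^ n)).fun_mul h3)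
      refine h4.congr_deriv ?_
      simp [hPoly, pow_succ]
      ring
    have : iteratedDeriv n (fun y => Real.exp (-y ^ 2))
        = fun z : ℝ => (-1 : ℝ) ^ n * (hPoly n).eval z * Real.exp (-z ^ 2) := funext ih
    rw [this]
    exact (hD x).deriv

lemma physHermite_eq (n : ℕ) (x : ℝ) : physHermite n x = (hPoly n).eval x := by
  rw [physHermite, iteratedDeriv_gauss]
  rw [show (-1:ℝ)^n * Real.exp (x^2) * ((-1:ℝ)^n * (hPoly n).eval x * Real.exp (-x^2))
    = ((-1:ℝ)^n)^2 * (Real.exp (x^2) * Real.exp (-x^2)) * (hPoly n).eval x by ring]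
  rw [← Real.exp_add]
  simp [← pow_mul, pow_mul']


open Polynomial
lemma hPoly_natDegree_le (n : ℕ) : (hPoly n).natDegree ≤ n := by
  induction n with
  | zero => simp [hPoly]
  | succ n ih =>
    rw [hPoly]
    refine (natDegree_sub_le _ _).trans ?_
    have h1 : (2 * X * hPoly n).natDegree ≤ n + 1 := by
      refine (natDegree_mul_le).trans ?_
      have : (2 * X : Polynomial ℝ).natDegree ≤ 1 := by
        refine (natDegree_mul_le).trans ?_
        simp
      omega
    have h2 : (derivative (hPoly n)).natDegree ≤ n + 1 :=
      (natDegree_derivative_le _).trans (by omega)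
    omega

lemma hPoly_coeff (n : ℕ) : (hPoly n).coeff n = 2 ^ n := by
  induction n with
  | zero => simp [hPoly]
  | succ n ih =>
    rw [hPoly]
    rw [coeff_sub]
    have hd : (derivative (hPoly n)).coeff (n + 1) = 0 := by
      rw [coeff_derivative]
      have : (hPoly n).coeff (n + 1 + 1) = 0 :=
        coeff_eq_zero_of_natDegree_lt (by have := hPoly_natDegree_le n; omega)
      simp [this]
    have hm : (2 * X * hPoly n).coeff (n + 1) = 2 * (hPoly n).coeff n := by
      rw [mul_assoc, coeff_ofNat_mul, coeff_X_mul]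
    rw [hd, hm, ih]
    ring

lemma hPoly_ne_zero (n : ℕ) : hPoly n ≠ 0 := fun h => by
  have := hPoly_coeff n
  rw [h] at this
  simp at this
  exact absurd this.symm (by positivity)

lemma hPoly_natDegree (n : ℕ) : (hPoly n).natDegree = n := by
  refine le_antisymm (hPoly_natDegree_le n) ?_
  exact le_natDegree_of_ne_zero (by rw [hPoly_coeff]; positivity)

lemma hPoly_leadingCoeff (n : ℕ) : (hPoly n).leadingCoeff = 2 ^ n := by
  rw [leadingCoeff, hPoly_natDegree, hPoly_coeff]

open Polynomial in
noncomputable def QP (a b : ℕ) : Polynomial ℝ := hPoly b * hPoly (b + a)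

lemma QP_natDegree (a b : ℕ) : (QP a b).natDegree = 2 * b + a := by
  rw [QP, natDegree_mul (hPoly_ne_zero _) (hPoly_ne_zero _), hPoly_natDegree, hPoly_natDegree]
  omega

lemma QP_ne_zero (a b : ℕ) : QP a b ≠ 0 := mul_ne_zero (hPoly_ne_zero _) (hPoly_ne_zero _)

lemma combo_ne_zero {d : ℕ} (a : ℕ) (c : Fin d → ℝ) (hc : c ≠ 0) :
    ∑ b, c b • QP a (b : ℕ) ≠ 0 := by
  have hne : (Finset.univ.filter fun b : Fin d => c b ≠ 0).Nonempty := by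
    rcases Function.ne_iff.mp hc with ⟨b, hb⟩
    exact ⟨b, by simpa using hb⟩
  obtain ⟨b₀, hb₀mem, hb₀max⟩ := Finset.exists_max_image _ id hne
  simp only [Finset.mem_filter, Finset.mem_univ, true_and] at hb₀mem
  intro h
  have hcoeff : (∑ b, c b • QP a (b : ℕ)).coeff (2 * (b₀ : ℕ) + a) = c b₀ * 2 ^ (2 * (b₀:ℕ) + a) := by
    rw [finset_sum_coeff]
    rw [Finset.sum_eq_single b₀]
    · rw [coeff_smul, smul_eq_mul]
      have : (QP a (b₀ : ℕ)).coeff (2 * (b₀:ℕ) + a) = 2 ^ (2 * (b₀:ℕ) + a) := by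
        have := (QP a (b₀ : ℕ)).coeff_natDegree
        rw [QP_natDegree] at this
        rw [this]
        rw [QP, leadingCoeff_mul, hPoly_leadingCoeff, hPoly_leadingCoeff, ← pow_add]
        congr 1; omega
      rw [this]
    · intro b _ hb
      rcases eq_or_ne (c b) 0 with h0 | h0
      · simp [h0]
      · have hlt : b < b₀ := by
          have := hb₀max b (by simp [h0])
          simp only [id] at this
          exact lt_of_le_of_ne this (by simpa using hb)
        rw [coeff_smul, coeff_eq_zero_of_natDegree_lt, smul_zero]
        rw [QP_natDegree]
        have : (b : ℕ) < (b₀ : ℕ) := hlt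
        omega
    · simp
  rw [h] at hcoeff
  simp only [coeff_zero] at hcoeff
  have : c b₀ * 2 ^ (2 * (b₀:ℕ) + a) ≠ 0 :=
    mul_ne_zero hb₀mem (by positivity)
  exact this hcoeff.symm
open Polynomial intervalIntegral

noncomputable def GInt (q : Polynomial ℝ) (x : ℝ) : ℝ :=
  ∫ t in (0:ℝ)..x, q.eval t * Real.exp (-t ^ 2)

lemma GInt_hasDerivAt (q : Polynomial ℝ) (x : ℝ) :
    HasDerivAt (GInt q) (q.eval x * Real.exp (-x ^ 2)) x := by
  have hc : Continuous fun t : ℝ => q.eval t * Real.exp (-t ^ 2) := by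
    exact (q.continuous_aeval).mul (Real.continuous_exp.comp (by continuity))
  exact (hc.integral_hasStrictDerivAt 0 x).hasDerivAt

lemma GInt_level_finite (q : Polynomial ℝ) (hq : q ≠ 0) (K : ℝ) :
    {x : ℝ | GInt q x = K}.Finite := by
  by_contra hinf
  rw [← Set.not_infinite, not_not] at hinf
  obtain ⟨s, hs_sub, hs_card⟩ := hinf.exists_subset_card_eq (q.natDegree + 2)
  set N := q.natDegree + 2 with hN
  have hcard : s.card = N := hs_card
  let e := s.orderIsoOfFin hcard
  have he_mono : StrictMono fun i : Fin N => (e i : ℝ) := fun i j hij => e.strictMono hij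
  have hval : ∀ i : Fin N, GInt q (e i : ℝ) = K := fun i => hs_sub (e i).2
  -- Rolle between consecutive points
  have hz : ∀ i : Fin (q.natDegree + 1), ∃ z ∈ Set.Ioo ((e i.castSucc : ℝ)) ((e i.succ : ℝ)),
      q.eval z = 0 := by
    intro i
    have hlt : (e i.castSucc : ℝ) < (e i.succ : ℝ) := he_mono (Fin.castSucc_lt_succ (i := i))
    have := exists_hasDerivAt_eq_zero (f := GInt q)
      (f' := fun x => q.eval x * Real.exp (-x ^ 2)) hlt
      (fun x _ => (GInt_hasDerivAt q x).continuousAt.continuousWithinAt)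
      (by rw [hval, hval])
      (fun x _ => GInt_hasDerivAt q x)
    obtain ⟨z, hz1, hz2⟩ := this
    refine ⟨z, hz1, ?_⟩
    have := Real.exp_pos (-z ^ 2)
    rcases mul_eq_zero.mp hz2 with h | h
    · exact h
    · linarith
  choose z hz1 hz2 using hz
  have hzmono : StrictMono z := by
    intro i j hij
    have h1 : z i < (e i.succ : ℝ) := (hz1 i).2
    have h2 : (e j.castSucc : ℝ) < z j := (hz1 j).1
    have h3 : (e i.succ : ℝ) ≤ (e j.castSucc : ℝ) := by
      rcases eq_or_lt_of_le (Fin.succ_le_castSucc_iff.mpr hij) with h | h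
      · rw [h]
      · exact le_of_lt (he_mono h)
    linarith
  have := Polynomial.eq_zero_of_natDegree_lt_card_of_eval_eq_zero q hzmono.injective hz2 ?_
  · exact hq this
  · simp
open Polynomial intervalIntegral in
lemma GInt_combo {d : ℕ} (a : ℕ) (c : Fin d → ℝ) (x : ℝ) :
    ∑ b, c b * GInt (QP a (b : ℕ)) x = GInt (∑ b, c b • QP a (b : ℕ)) x := by
  unfold GInt
  have hmv : ∀ b : Fin d, c b * ∫ t in (0:ℝ)..x, (QP a (b:ℕ)).eval t * Real.exp (-t^2)
      = ∫ t in (0:ℝ)..x, c b * ((QP a (b:ℕ)).eval t * Real.exp (-t^2)) :=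
    fun b => (intervalIntegral.integral_const_mul _ _).symm
  rw [Finset.sum_congr rfl fun b _ => hmv b, ← intervalIntegral.integral_finset_sum]
  · congr 1
    ext t
    rw [Polynomial.eval_finset_sum, Finset.sum_mul]
    exact Finset.sum_congr rfl fun b _ => by simp [mul_assoc]
  · intro b _
    have : Continuous fun t : ℝ => c b * ((QP a (b:ℕ)).eval t * Real.exp (-t ^ 2)) :=
      continuous_const.mul ((QP a (b:ℕ)).continuous.mul
        (Real.continuous_exp.comp (continuous_pow 2).neg))
    simpa [mul_assoc] using this.intervalIntegrable 0 x

noncomputable def Lmap (a d : ℕ) (x : ℝ) : (Fin d → ℝ) →ₗ[ℝ] ℝ :=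
  ∑ b : Fin d, GInt (QP a (b : ℕ)) x • LinearMap.proj b

lemma Lmap_apply (a d : ℕ) (x : ℝ) (c : Fin d → ℝ) :
    Lmap a d x c = ∑ b, c b * GInt (QP a (b : ℕ)) x := by
  simp [Lmap, mul_comm]

noncomputable def KerT (a d : ℕ) {m : ℕ} (t : Fin (m + 1) → ℝ) :
    Submodule ℝ (Fin d → ℝ) :=
  ⨅ j : Fin (m + 1), LinearMap.ker (Lmap a d (t j) - Lmap a d (t 0))

lemma greedy (k : ℕ) (m : ℕ) : ∃ t : Fin (m + 1) → ℝ, StrictMono t ∧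
    ∀ a ≤ k, Module.finrank ℝ (KerT a (k - a + 1) t) ≤ (k - a + 1) - m := by
  induction m with
  | zero =>
    refine ⟨fun _ => 0, fun i j h => by
      have hi := i.isLt; have hj := j.isLt
      have hij : (i:ℕ) < (j:ℕ) := h
      omega, ?_⟩
    intro a _
    simpa using Submodule.finrank_le (KerT a (k - a + 1) (fun _ => (0:ℝ)))
  | succ m ih =>
    obtain ⟨t, ht, hker⟩ := ih
    -- for each a, a finite bad set
    have step_a : ∀ a : ℕ, ∃ S : Set ℝ, S.Finite ∧ ∀ x ∉ S,
        KerT a (k - a + 1) t ≠ ⊥ →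
        ∃ c ∈ KerT a (k - a + 1) t, Lmap a (k - a + 1) x c ≠ Lmap a (k - a + 1) (t 0) c := by
      intro a
      by_cases hbot : KerT a (k - a + 1) t = ⊥
      · exact ⟨∅, Set.finite_empty, fun x _ h => absurd hbot h⟩
      · obtain ⟨c, hcmem, hcne⟩ := (Submodule.ne_bot_iff _).mp hbot
        have hq : (∑ b, c b • QP a (b : ℕ)) ≠ 0 := combo_ne_zero a c hcne
        refine ⟨{x | GInt (∑ b, c b • QP a (b : ℕ)) x
            = GInt (∑ b, c b • QP a (b : ℕ)) (t 0)}, GInt_level_finite _ hq _, ?_⟩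
        intro x hx _
        refine ⟨c, hcmem, ?_⟩
        rw [Lmap_apply, Lmap_apply, GInt_combo, GInt_combo]
        exact hx
    choose S hSfin hSprop using step_a
    have hbadfin : (⋃ a ∈ Finset.range (k + 1), S a).Finite :=
      Set.Finite.biUnion (Finset.range (k+1)).finite_toSet (fun a _ => hSfin a)
    obtain ⟨xnew, hxnew⟩ := ((Set.Ioi_infinite (t (Fin.last m))).diff hbadfin).nonempty
    obtain ⟨hxgt, hxbad⟩ := hxnew
    set t' : Fin (m + 2) → ℝ := fun j => if h : (j : ℕ) < m + 1 then t ⟨j, h⟩ else xnew with ht'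
    have ht'cast : ∀ j : Fin (m + 1), t' j.castSucc = t j := by
      intro j
      simp only [ht']
      rw [dif_pos (by simpa using j.isLt)]
      exact congrArg t (Fin.ext (by simp))
    have ht'0 : t' 0 = t 0 := by
      simpa using ht'cast 0
    have ht'last : t' (Fin.last (m + 1)) = xnew := by
      simp [ht']
    refine ⟨t', ?_, ?_⟩
    · intro i j hij
      have hij' : (i : ℕ) < (j : ℕ) := hij
      simp only [ht']
      by_cases hi : (i : ℕ) < m + 1
      · rw [dif_pos hi]
        by_cases hj : (j : ℕ) < m + 1
        · rw [dif_pos hj]; exact ht (by exact hij')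
        · rw [dif_neg hj]
          calc t ⟨i, hi⟩ ≤ t (Fin.last m) := ht.monotone (by rw [Fin.le_def]; simp; omega)
          _ < xnew := hxgt
      · exfalso; have := j.isLt; omega
    · intro a hak
      have hle : KerT a (k - a + 1) t' ≤ KerT a (k - a + 1) t := by
        refine le_iInf fun j => ?_
        refine le_trans (iInf_le _ j.castSucc) (le_of_eq ?_)
        rw [ht'cast, ht'0]
      by_cases hbot : KerT a (k - a + 1) t = ⊥
      · have h0 : KerT a (k - a + 1) t' = ⊥ := le_bot_iff.mp (hbot ▸ hle)
        rw [h0, finrank_bot]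
        omega
      · have hxS : xnew ∉ S a := by
          intro hmem
          refine hxbad (Set.mem_biUnion (show a ∈ (Finset.range (k+1) : Set ℕ) from ?_) hmem)
          simp only [Finset.coe_range, Set.mem_Iio]
          omega
        obtain ⟨c, hcmem, hcne⟩ := hSprop a xnew hxS hbot
        have hnot : c ∉ KerT a (k - a + 1) t' := by
          intro hc
          have := iInf_le (fun j : Fin (m+2) => LinearMap.ker (Lmap a (k-a+1) (t' j) - Lmap a (k-a+1) (t' 0))) (Fin.last (m+1)) hc
          rw [LinearMap.mem_ker, LinearMap.sub_apply, ht'last, ht'0, sub_eq_zero] at this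
          exact hcne this
        have hlt : KerT a (k - a + 1) t' < KerT a (k - a + 1) t :=
          lt_of_le_of_ne hle (fun he => hnot (he ▸ hcmem))
        have h1 : Module.finrank ℝ (KerT a (k - a + 1) t') < Module.finrank ℝ (KerT a (k - a + 1) t) :=
          Submodule.finrank_lt_finrank_of_lt hlt
        have h2 := hker a hak
        omega

noncomputable def hermC (a b : ℕ) : ℝ :=
  (Real.sqrt (2 ^ (b + (b + a)) * (Nat.factorial b) * (Nat.factorial (b + a)) * Real.pi))⁻¹

lemma hermC_ne_zero (a b : ℕ) : hermC a b ≠ 0 := by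
  have h : (0:ℝ) < 2 ^ (b + (b + a)) * (Nat.factorial b) * (Nat.factorial (b + a)) * Real.pi := by
    have hπ := Real.pi_pos
    have h1 : (0:ℝ) < (Nat.factorial b : ℝ) := by exact_mod_cast (Nat.factorial_pos b)
    have h2 : (0:ℝ) < (Nat.factorial (b+a) : ℝ) := by exact_mod_cast (Nat.factorial_pos (b+a))
    positivity
  exact inv_ne_zero (ne_of_gt (Real.sqrt_pos.mpr h))

lemma hermOverlap_GInt (a b : ℕ) (u v : ℝ) :
    hermOverlap b (b + a) u v = hermC a b * (GInt (QP a b) v - GInt (QP a b) u) := by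
  rw [hermOverlap]
  unfold hermC
  congr 1
  have hint : ∀ w : ℝ, IntervalIntegrable (fun t : ℝ => (QP a b).eval t * Real.exp (-t^2))
      MeasureTheory.volume 0 w := fun w =>
    ((QP a b).continuous.mul (Real.continuous_exp.comp (continuous_pow 2).neg)).intervalIntegrable _ _
  rw [GInt, GInt, intervalIntegral.integral_interval_sub_left (hint v) (hint u)]
  apply intervalIntegral.integral_congr
  intro s _
  simp [physHermite_eq, QP, Polynomial.eval_mul]

lemma hermOverlap_comm (m n : ℕ) (u v : ℝ) : hermOverlap m n u v = hermOverlap n m u v := by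
  rw [hermOverlap, hermOverlap]
  have h1 : (2:ℝ) ^ (m + n) * (Nat.factorial m) * (Nat.factorial n) * Real.pi
      = 2 ^ (n + m) * (Nat.factorial n) * (Nat.factorial m) * Real.pi := by
    rw [add_comm m n]; ring
  rw [h1]
  congr 1
  apply intervalIntegral.integral_congr
  intro s _
  ring

lemma sum_offset (k d : ℕ) (hd : d ≤ k) (F : Fin (k+1) → Fin (k+1) → ℂ) :
    (∑ m : Fin (k+1), ∑ n : Fin (k+1),
      (if ((m:ℕ):ℤ) - ((n:ℕ):ℤ) = (d:ℤ) then F m n else 0))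
    = ∑ b : Fin (k - d + 1), F ⟨(b:ℕ) + d, by omega⟩ ⟨(b:ℕ), by omega⟩ := by
  classical
  rw [Finset.sum_comm]
  have h1 : ∀ n : Fin (k+1), (∑ m : Fin (k+1),
      if ((m:ℕ):ℤ) - ((n:ℕ):ℤ) = (d:ℤ) then F m n else 0)
      = if h : (n:ℕ) + d ≤ k then F ⟨(n:ℕ) + d, by omega⟩ n else 0 := by
    intro n
    by_cases h : (n:ℕ) + d ≤ k
    · rw [dif_pos h]
      have hiff : ∀ m : Fin (k+1), ((((m:ℕ):ℤ) - ((n:ℕ):ℤ) = (d:ℤ))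
          ↔ m = (⟨(n:ℕ) + d, by omega⟩ : Fin (k+1))) := by
        intro m
        have hval : ((⟨(n:ℕ) + d, by omega⟩ : Fin (k+1)) : ℕ) = (n:ℕ) + d := rfl
        rw [Fin.ext_iff, hval]
        omega
      calc (∑ m : Fin (k+1), if ((m:ℕ):ℤ) - ((n:ℕ):ℤ) = (d:ℤ) then F m n else 0)
          = ∑ m : Fin (k+1), if m = (⟨(n:ℕ) + d, by omega⟩ : Fin (k+1)) then F m n else 0 :=
            Finset.sum_congr rfl fun m _ => if_congr (hiff m) rfl rfl
        _ = F ⟨(n:ℕ) + d, by omega⟩ n := by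
            rw [Finset.sum_ite_eq' Finset.univ _ (fun m => F m n)]
            simp
    · rw [dif_neg h]
      apply Finset.sum_eq_zero
      intro m _
      rw [if_neg]
      have := m.isLt
      omega
  rw [Finset.sum_congr rfl fun n _ => h1 n]
  have hinj : Function.Injective (fun b : Fin (k-d+1) => (⟨(b:ℕ), by omega⟩ : Fin (k+1))) := by
    intro b1 b2 hb
    rw [Fin.ext_iff] at hb ⊢
    exact hb
  rw [← Finset.sum_subset (Finset.subset_univ
      (Finset.univ.map ⟨fun b : Fin (k-d+1) => (⟨(b:ℕ), by omega⟩ : Fin (k+1)), hinj⟩))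
    (fun n _ hn => ?_), Finset.sum_map]
  · apply Finset.sum_congr rfl
    intro b _
    simp only [Function.Embedding.coeFn_mk, Fin.val_mk]
    rw [dif_pos (by have := b.isLt; omega : (b:ℕ) + d ≤ k)]
  · rw [dif_neg]
    intro hc
    exact hn (Finset.mem_map.mpr ⟨⟨(n:ℕ), by omega⟩, Finset.mem_univ _, Fin.ext rfl⟩)

lemma sum_offset_neg (k d : ℕ) (hd : d ≤ k) (F : Fin (k+1) → Fin (k+1) → ℂ) :
    (∑ m : Fin (k+1), ∑ n : Fin (k+1),
      (if ((m:ℕ):ℤ) - ((n:ℕ):ℤ) = -(d:ℤ) then F m n else 0))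
    = ∑ b : Fin (k - d + 1), F ⟨(b:ℕ), by omega⟩ ⟨(b:ℕ) + d, by omega⟩ := by
  rw [Finset.sum_comm]
  have h := sum_offset k d hd (fun x y => F y x)
  rw [← h]
  apply Finset.sum_congr rfl
  intro n _
  apply Finset.sum_congr rfl
  intro m _
  exact if_congr (by omega) rfl rfl

/-- For `M ≥ n_max + 1` there exist bin edges `x_1 < … < x_{M+1}` such that
for every offset `a ∈ {0,…,n_max}`, the `M × (n_max − a + 1)` matrix `H_a` with entries
`(H_a)_{i,b} = (2^{2b+a} b! (b+a)! π)^{−1/2} ∫_{x_i}^{x_{i+1}} H_b H_{b+a} e^{−x²}`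
has full column rank (its columns are linearly independent).  In particular, for these bins,
if complex coefficients `r_{m,n}` satisfy `Σ_{m−n = a} r_{m,n} (H_{|a|})_{i, min(m,n)} = 0`
for all bins `i` and all offsets `a ∈ ℤ`, then all `r_{m,n} = 0`. -/
theorem hermite_bins_full_column_rank (nmax M : ℕ) (hM : M ≥ nmax + 1) :
    ∃ x : Fin (M + 1) → ℝ, StrictMono x ∧
      (∀ a : ℕ, a ≤ nmax →
        LinearIndependent ℝ (fun b : Fin (nmax - a + 1) => fun i : Fin M =>
          hermOverlap (b : ℕ) ((b : ℕ) + a) (x i.castSucc) (x i.succ))) ∧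
      (∀ r : Fin (nmax + 1) → Fin (nmax + 1) → ℂ,
        (∀ a : ℤ, ∀ i : Fin M,
          ∑ m : Fin (nmax + 1), ∑ n : Fin (nmax + 1),
            (if ((m : ℕ) : ℤ) - ((n : ℕ) : ℤ) = a then
              r m n * (hermOverlap (m : ℕ) (n : ℕ) (x i.castSucc) (x i.succ) : ℂ)
            else 0) = 0) →
        ∀ m n, r m n = 0) := by
  obtain ⟨t, ht, hkerb⟩ := greedy nmax M
  have hbot : ∀ a ≤ nmax, KerT a (nmax - a + 1) t = ⊥ := by
    intro a ha
    have h := hkerb a ha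
    rw [show nmax - a + 1 - M = 0 by omega] at h
    exact Submodule.finrank_eq_zero.mp (Nat.le_zero.mp h)
  have hLI : ∀ a ≤ nmax, LinearIndependent ℝ (fun b : Fin (nmax - a + 1) => fun i : Fin M =>
      hermOverlap (b : ℕ) ((b:ℕ) + a) (t i.castSucc) (t i.succ)) := by
    intro a ha
    rw [Fintype.linearIndependent_iff]
    intro g hg
    set c : Fin (nmax - a + 1) → ℝ := fun b => g b * hermC a (b : ℕ) with hcdef
    have hrel : ∀ i : Fin M, ∑ b, c b * GInt (QP a (b:ℕ)) (t i.succ)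
        = ∑ b, c b * GInt (QP a (b:ℕ)) (t i.castSucc) := by
      intro i
      have h0 := congrFun hg i
      simp only [Finset.sum_apply, Pi.smul_apply, smul_eq_mul, Pi.zero_apply] at h0
      have h2 : ∑ b : Fin (nmax - a + 1), (c b * GInt (QP a (b:ℕ)) (t i.succ)
          - c b * GInt (QP a (b:ℕ)) (t i.castSucc)) = 0 := by
        rw [← h0]
        apply Finset.sum_congr rfl
        intro b _
        rw [hermOverlap_GInt]
        simp only [hcdef]
        ring
      rw [Finset.sum_sub_distrib, sub_eq_zero] at h2
      exact h2
    have hconst : ∀ j : Fin (M+1), ∑ b, c b * GInt (QP a (b:ℕ)) (t j)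
        = ∑ b, c b * GInt (QP a (b:ℕ)) (t 0) := by
      intro j
      induction j using Fin.induction with
      | zero => rfl
      | succ i ihj => rw [hrel i]; exact ihj
    have hmem : c ∈ KerT a (nmax - a + 1) t := by
      rw [KerT, Submodule.mem_iInf]
      intro j
      rw [LinearMap.mem_ker, LinearMap.sub_apply, Lmap_apply, Lmap_apply, sub_eq_zero]
      exact hconst j
    rw [hbot a ha, Submodule.mem_bot] at hmem
    intro b
    have hb := congrFun hmem b
    simp only [hcdef, Pi.zero_apply] at hb
    rcases mul_eq_zero.mp hb with h | h
    · exact h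
    · exact absurd h (hermC_ne_zero a _)
  refine ⟨t, ht, fun a ha => hLI a ha, ?_⟩
  intro r hr
  have hpos : ∀ d : ℕ, (hd : d ≤ nmax) → ∀ b : Fin (nmax - d + 1),
      r ⟨(b:ℕ) + d, by have := b.isLt; omega⟩ ⟨(b:ℕ), by have := b.isLt; omega⟩ = 0 := by
    intro d hd
    have hsum2 : ∀ i : Fin M, ∑ b : Fin (nmax - d + 1),
        r ⟨(b:ℕ) + d, by have := b.isLt; omega⟩ ⟨(b:ℕ), by have := b.isLt; omega⟩
          * ((hermOverlap (b:ℕ) ((b:ℕ) + d) (t i.castSucc) (t i.succ) : ℝ) : ℂ) = 0 := by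
      intro i
      have h := hr (d : ℤ) i
      rw [sum_offset nmax d hd] at h
      rw [← h]
      apply Finset.sum_congr rfl
      intro b _
      rw [hermOverlap_comm]
    have hre0 := Fintype.linearIndependent_iff.mp (hLI d hd)
      (fun b => (r ⟨(b:ℕ) + d, by have := b.isLt; omega⟩ ⟨(b:ℕ), by have := b.isLt; omega⟩).re)
      (by
        funext i
        simp only [Finset.sum_apply, Pi.smul_apply, smul_eq_mul, Pi.zero_apply]
        have h := congrArg Complex.re (hsum2 i)
        rw [Complex.re_sum] at h
        simpa [Complex.mul_re] using h)
    have him0 := Fintype.linearIndependent_iff.mp (hLI d hd)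
      (fun b => (r ⟨(b:ℕ) + d, by have := b.isLt; omega⟩ ⟨(b:ℕ), by have := b.isLt; omega⟩).im)
      (by
        funext i
        simp only [Finset.sum_apply, Pi.smul_apply, smul_eq_mul, Pi.zero_apply]
        have h := congrArg Complex.im (hsum2 i)
        rw [Complex.im_sum] at h
        simpa [Complex.mul_im] using h)
    intro b
    exact Complex.ext (hre0 b) (him0 b)
  have hneg : ∀ d : ℕ, (hd : d ≤ nmax) → ∀ b : Fin (nmax - d + 1),
      r ⟨(b:ℕ), by have := b.isLt; omega⟩ ⟨(b:ℕ) + d, by have := b.isLt; omega⟩ = 0 := by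
    intro d hd
    have hsum2 : ∀ i : Fin M, ∑ b : Fin (nmax - d + 1),
        r ⟨(b:ℕ), by have := b.isLt; omega⟩ ⟨(b:ℕ) + d, by have := b.isLt; omega⟩
          * ((hermOverlap (b:ℕ) ((b:ℕ) + d) (t i.castSucc) (t i.succ) : ℝ) : ℂ) = 0 := by
      intro i
      have h := hr (-(d : ℤ)) i
      rw [sum_offset_neg nmax d hd] at h
      exact h
    have hre0 := Fintype.linearIndependent_iff.mp (hLI d hd)
      (fun b => (r ⟨(b:ℕ), by have := b.isLt; omega⟩ ⟨(b:ℕ) + d, by have := b.isLt; omega⟩).re)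
      (by
        funext i
        simp only [Finset.sum_apply, Pi.smul_apply, smul_eq_mul, Pi.zero_apply]
        have h := congrArg Complex.re (hsum2 i)
        rw [Complex.re_sum] at h
        simpa [Complex.mul_re] using h)
    have him0 := Fintype.linearIndependent_iff.mp (hLI d hd)
      (fun b => (r ⟨(b:ℕ), by have := b.isLt; omega⟩ ⟨(b:ℕ) + d, by have := b.isLt; omega⟩).im)
      (by
        funext i
        simp only [Finset.sum_apply, Pi.smul_apply, smul_eq_mul, Pi.zero_apply]
        have h := congrArg Complex.im (hsum2 i)
        rw [Complex.im_sum] at h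
        simpa [Complex.mul_im] using h)
    intro b
    exact Complex.ext (hre0 b) (him0 b)
  intro m n
  rcases le_total (n:ℕ) (m:ℕ) with hmn | hmn
  · have hd : (m:ℕ) - (n:ℕ) ≤ nmax := by have := m.isLt; omega
    have hb : (n:ℕ) < nmax - ((m:ℕ) - (n:ℕ)) + 1 := by
      have := m.isLt; have := n.isLt; omega
    have h0 := hpos ((m:ℕ) - (n:ℕ)) hd ⟨(n:ℕ), hb⟩
    convert h0 using 2 <;> exact Fin.ext (by simp only [Fin.val_mk]; omega)
  · have hd : (n:ℕ) - (m:ℕ) ≤ nmax := by have := n.isLt; omega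
    have hb : (m:ℕ) < nmax - ((n:ℕ) - (m:ℕ)) + 1 := by
      have := m.isLt; have := n.isLt; omega
    have h0 := hneg ((n:ℕ) - (m:ℕ)) hd ⟨(m:ℕ), hb⟩
    convert h0 using 2 <;> exact Fin.ext (by simp only [Fin.val_mk]; omega)
end
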